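/- Let γ, R > 0, let j be an integer, and let w ∈ ℂ be such that w² + iγ does not lie in the half-line (−∞, 0]. Let z := sq₋(w² + iγ) and h(w) := (z − w)/(z + w) (both z − w and z + w are nonzero since z² − w² = iγ ≠ 0). If w = (i/(2R))·(log₋(h(w)) + 2πij), where log₋ ζ := ln|ζ| + i·arg₋(ζ), then (z − w)·e^{iRw} − (z + w)·e^{−iRw} = 0. -/

import Mathlib

/-- The argument in `[-π, π)`: it agrees with the principal argument `Complex.arg`
except on the negative real axis, where it takes the value `-π`. -/
noncomputable def argm (ζ : ℂ) : ℝ :=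
  if Complex.arg ζ = Real.pi then -Real.pi else Complex.arg ζ

/-- The branch `sq₋` of the square root with branch cut along the negative real axis:
`sq₋(ζ) = √|ζ|·exp(i·arg₋(ζ)/2)`. -/
noncomputable def sqm (ζ : ℂ) : ℂ :=
  (Real.sqrt ‖ζ‖ : ℂ) * Complex.exp (Complex.I * (argm ζ) / 2)

/-- The branch `log₋` of the logarithm: `log₋ ζ = ln|ζ| + i·arg₋(ζ)`. -/
noncomputable def logm (ζ : ℂ) : ℂ :=
  (Real.log ‖ζ‖ : ℂ) + Complex.I * (argm ζ)

/-! The fixed point equation says `-2iRw ≡ log₋ h(w) (mod 2πi)`, so `e^{-2iRw} = h(w)`, which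
is the eigenvalue equation divided by `(z + w) e^{iRw}`. The division is legitimate because
`(z - w)(z + w) = z² - w² = iγ ≠ 0`. -/

open Complex

theorem exp_I_mul_argm (ζ : ℂ) : exp (I * argm ζ) = exp (I * arg ζ) := by
  unfold argm
  split_ifs with h
  · rw [h, ofReal_neg, mul_neg, exp_neg, mul_comm, exp_pi_mul_I]
    norm_num
  · rfl

theorem sqm_sq (ζ : ℂ) : sqm ζ ^ 2 = ζ := by
  have hsqrt : ((Real.sqrt ‖ζ‖ : ℝ) : ℂ) ^ 2 = ‖ζ‖ := by
    exact_mod_cast Real.sq_sqrt (norm_nonneg ζ)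
  rw [sqm, mul_pow, ← exp_nat_mul, hsqrt,
    show ((2 : ℕ) : ℂ) * (I * argm ζ / 2) = I * argm ζ by push_cast; ring,
    exp_I_mul_argm, mul_comm I, norm_mul_exp_arg_mul_I]

theorem exp_logm {ζ : ℂ} (hζ : ζ ≠ 0) : exp (logm ζ) = ζ := by
  rw [logm, exp_add, ← ofReal_exp, Real.exp_log (norm_pos_iff.mpr hζ), exp_I_mul_argm,
    mul_comm I, norm_mul_exp_arg_mul_I]

theorem exp_neg_two_mul_I_mul_eq_of_eq_I_div_mul_logm {R : ℝ} (hR : R ≠ 0) {ζ w : ℂ}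
    (hζ : ζ ≠ 0) (j : ℤ) (hw : w = I / (2 * R) * (logm ζ + 2 * Real.pi * I * j)) :
    exp (-(2 * (I * R * w))) = ζ := by
  have hR' : (R : ℂ) ≠ 0 := ofReal_ne_zero.mpr hR
  have hlog : -(2 * (I * R * w)) = logm ζ + j * (2 * Real.pi * I) := by
    rw [hw]
    field_simp
    linear_combination (-(logm ζ) - 2 * Real.pi * I * j) * I_sq
  rw [hlog, exp_add, exp_logm hζ, exp_int_mul_two_pi_mul_I, mul_one]

theorem mul_exp_sub_mul_exp_neg_eq_zero {a b x : ℂ} (hb : b ≠ 0)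
    (h : exp (-(2 * x)) = a / b) : a * exp x - b * exp (-x) = 0 := by
  have hsplit : exp (-x) = exp (-(2 * x)) * exp x := by rw [← exp_add]; ring_nf
  rw [hsplit, h]
  field_simp
  ring

theorem sub_ne_zero_and_add_ne_zero_of_sq_sub_sq_ne_zero {z w : ℂ} (h : z ^ 2 - w ^ 2 ≠ 0) :
    z - w ≠ 0 ∧ z + w ≠ 0 := by
  rw [sq_sub_sq, mul_ne_zero_iff] at h
  exact ⟨h.2, h.1⟩

theorem fixed_point_implies_eigenvalue_equation_general
    (γ R : ℝ) (hγ : 0 < γ) (hR : 0 < R) (j : ℤ) (w : ℂ)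
    (hfix : w = (Complex.I / (2 * R)) *
      (logm ((sqm (w ^ 2 + Complex.I * γ) - w) / (sqm (w ^ 2 + Complex.I * γ) + w)) +
        2 * Real.pi * Complex.I * j)) :
    (sqm (w ^ 2 + Complex.I * γ) - w) * Complex.exp (Complex.I * R * w) -
      (sqm (w ^ 2 + Complex.I * γ) + w) * Complex.exp (-(Complex.I * R * w)) = 0 := by
  set z := sqm (w ^ 2 + I * γ)
  have hdiff : z ^ 2 - w ^ 2 ≠ 0 := by
    rw [sqm_sq, add_sub_cancel_left]
    exact mul_ne_zero I_ne_zero (ofReal_ne_zero.mpr hγ.ne')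
  obtain ⟨hsub, hadd⟩ := sub_ne_zero_and_add_ne_zero_of_sq_sub_sq_ne_zero hdiff
  exact mul_exp_sub_mul_exp_neg_eq_zero hadd <|
    exp_neg_two_mul_I_mul_eq_of_eq_I_div_mul_logm hR.ne' (div_ne_zero hsub hadd) j hfix

/-- If `w² + iγ` is not on the half-line `(−∞,0]` and `w` solves the fixed point equation
`w = (i/(2R))·(log₋ h(w) + 2πij)` with `h(w) = (z−w)/(z+w)`, `z = sq₋(w² + iγ)`, then
`(z − w)·e^{iRw} − (z + w)·e^{−iRw} = 0`, i.e. `w² + iγ` solves the eigenvalue equation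
for the dissipative barrier potential `iγχ_{[0,R]}`. -/
theorem fixed_point_implies_eigenvalue_equation
    (γ R : ℝ) (hγ : 0 < γ) (hR : 0 < R) (j : ℤ) (w : ℂ)
    (hnot : ¬ ((w ^ 2 + Complex.I * γ).im = 0 ∧ (w ^ 2 + Complex.I * γ).re ≤ 0))
    (hfix : w = (Complex.I / (2 * R)) *
      (logm ((sqm (w ^ 2 + Complex.I * γ) - w) / (sqm (w ^ 2 + Complex.I * γ) + w)) +
        2 * Real.pi * Complex.I * j)) :
    (sqm (w ^ 2 + Complex.I * γ) - w) * Complex.exp (Complex.I * R * w) -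
      (sqm (w ^ 2 + Complex.I * γ) + w) * Complex.exp (-(Complex.I * R * w)) = 0 :=
  fixed_point_implies_eigenvalue_equation_general γ R hγ hR j w hfix
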